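/- arXiv:2309.00689 — 3 statements merged into one kernel-verified Lean document; each statement's English description precedes it below -/
import Mathlib

section
/- Let $K$ be a complete discretely valued field with valuation ring $\mathcal{O}_K$, uniformizer $\pi$, and residue field $k$ of characteristic $\ne 2$. Let $q$ be a nondegenerate quadratic form over $K$, and write $q \simeq q_1 \perp \pi \cdot q_2$ where all diagonal entries of $q_1$ and $q_2$ are units in $\mathcal{O}_K$. Then $q$ is anisotropic and universal over $K$ if and only if both residue forms $\overline{q}_1, \overline{q}_2$ (obtained by reducing the unit entries modulo the maximal ideal) have positive dimension and are anisotropic and universal over $k$. -/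
open scoped Multiplicative ENNReal

/-- The diagonal quadratic form `⟨a i⟩` over the field `k`. -/
noncomputable def diagQF (k : Type*) [Field k] {ι : Type*} [Fintype ι] (a : ι → k) :
    QuadraticForm k (ι → k) :=
  QuadraticMap.weightedSumSquares k a

/-- A quadratic form is universal if it represents every nonzero element. -/
def QFUniversal {k M : Type*} [Field k] [AddCommGroup M] [Module k M]
    (q : QuadraticForm k M) : Prop :=
  ∀ a : k, a ≠ 0 → ∃ x, q x = a

/-- The set of dimensions of anisotropic universal (nondegenerate) quadratic forms over `k`;
every nondegenerate form over a field of characteristic `≠ 2` is isometric to a diagonal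
form with unit entries. -/
def AUSet (k : Type*) [Field k] : Set ℕ :=
  {n | ∃ a : Fin n → kˣ,
    (diagQF k fun i => (a i : k)).Anisotropic ∧ QFUniversal (diagQF k fun i => (a i : k))}

/-- The `m`-invariant: the minimal dimension of an anisotropic universal quadratic form
(`⊤` if there is none). -/
noncomputable def mInv (k : Type*) [Field k] : ℕ∞ :=
  sInf ((↑) '' AUSet k)

/-- The `u`-invariant: the maximal dimension of an anisotropic quadratic form
(`⊤` if there is no maximum). -/
noncomputable def uInv (k : Type*) [Field k] : ℕ∞ :=
  sSup ((↑) '' {n : ℕ | ∃ a : Fin n → kˣ, (diagQF k fun i => (a i : k)).Anisotropic})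

/-- `L` is a finitely generated field extension of transcendence degree one over `k`. -/
def IsOneVarFunctionField (k L : Type*) [Field k] [Field L] [Algebra k L] : Prop :=
  ∃ x : L, Transcendental k x ∧ FiniteDimensional ↥(IntermediateField.adjoin k {x}) L

universe u

/-- The strong `u`-invariant of `k`. -/
noncomputable def uS (k : Type u) [Field k] : ℝ≥0∞ :=
  sInf {n : ℝ≥0∞ |
    (∀ (k' : Type u) [Field k'] [Algebra k k'], FiniteDimensional k k' →
      (uInv k' : ℝ≥0∞) ≤ n) ∧
    (∀ (K' : Type u) [Field K'] [Algebra k K'], IsOneVarFunctionField k K' →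
      (uInv K' : ℝ≥0∞) ≤ 2 * n)}

/-- The strong `m`-invariant of `k`. -/
noncomputable def mS (k : Type u) [Field k] : ℝ≥0∞ :=
  sSup ((fun n : ℕ => (n : ℝ≥0∞)) ''
    {n : ℕ | ∀ (k' : Type u) [Field k'] [Algebra k k'], FiniteDimensional k k' →
      (n : ℕ∞) ≤ mInv k' ∧ ((2 * n : ℕ) : ℕ∞) ≤ mInv (RatFunc k')})

/-!
Since `2` is a unit, Hensel's lemma lifts a nontrivial zero, or a representation of a unit, by a
residue form `⟨ū⟩` or `⟨w̄⟩` to the integral form `⟨u⟩` or `⟨w⟩`; this gives anisotropy of the residue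
forms from that of `q`, and universality of `q` from that of the residue forms, using `⟨u⟩` for
elements of even valuation and `π⟨w⟩` for those of odd valuation.

Conversely, a nonzero vector over `K` is `π ^ k` times a primitive integral vector `y`. When both
residue forms are anisotropic, `q y` is either a unit with residue `q̄₁ ȳ₁` or `π` times a unit with
residue `q̄₂ ȳ₂`. Hence `q` is anisotropic, and the parity of the valuation of a value of `q`
determines which residue form represents its leading coefficient.
-/

open IsLocalRing Polynomial
open QuadraticMap (weightedSumSquares weightedSumSquares_apply)

section Diagonal

variable {ι ι' : Type*} [Fintype ι] [Fintype ι']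

theorem diagQF_map_apply {R k : Type*} [CommRing R] [Field k] (f : R →+* k) (b x : ι → R) :
    diagQF k (fun i => f (b i)) (fun i => f (x i)) = f (weightedSumSquares R b x) := by
  simp [diagQF, map_sum]

theorem weightedSumSquares_sum_elim {R : Type*} [CommRing R] (b : ι → R) (c : ι' → R)
    (x : ι ⊕ ι' → R) :
    weightedSumSquares R (Sum.elim b c) x =
      weightedSumSquares R b (fun i => x (Sum.inl i)) +
        weightedSumSquares R c (fun j => x (Sum.inr j)) := by
  simp [Fintype.sum_sum_type]

theorem weightedSumSquares_update {R : Type*} [CommRing R] [DecidableEq ι] (b x : ι → R)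
    (i : ι) (t : R) :
    weightedSumSquares R b (Function.update x i t) =
      weightedSumSquares R b x + b i * (t * t - x i * x i) := by
  simp only [weightedSumSquares_apply, smul_eq_mul]
  rw [← Finset.add_sum_erase _ _ (Finset.mem_univ i),
    ← Finset.add_sum_erase _ _ (Finset.mem_univ i), Function.update_self,
    Finset.sum_congr rfl fun j hj => by rw [Function.update_of_ne (Finset.ne_of_mem_erase hj)]]
  ring

theorem nonempty_of_qfUniversal {k : Type*} [Field k] {a : ι → k}
    (h : QFUniversal (diagQF k a)) : Nonempty ι := by
  by_contra hι
  rw [not_nonempty_iff] at hι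
  obtain ⟨x, hx⟩ := h 1 one_ne_zero
  simp [diagQF] at hx

variable {k : Type*} [Field k]

theorem QuadraticMap.Anisotropic.sum_elim_left {a : ι → k} {c : ι' → k}
    (h : (diagQF k (Sum.elim a c)).Anisotropic) : (diagQF k a).Anisotropic := by
  intro x hx
  have := h (Sum.elim x 0) (by simpa [diagQF, Fintype.sum_sum_type] using hx)
  ext i
  simpa using congrFun this (Sum.inl i)

theorem QuadraticMap.Anisotropic.sum_elim_right {a : ι → k} {c : ι' → k}
    (h : (diagQF k (Sum.elim a c)).Anisotropic) : (diagQF k c).Anisotropic := by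
  intro x hx
  have := h (Sum.elim 0 x) (by simpa [diagQF, Fintype.sum_sum_type] using hx)
  ext j
  simpa using congrFun this (Sum.inr j)

theorem QuadraticMap.Anisotropic.of_mul_left {a : ι → k} {c : k}
    (h : (diagQF k fun i => c * a i).Anisotropic) : (diagQF k a).Anisotropic := by
  intro x hx
  refine h x ?_
  simp only [diagQF, weightedSumSquares_apply, smul_eq_mul] at hx ⊢
  simp [mul_assoc, ← Finset.mul_sum, hx]

end Diagonal

theorem HenselianRing.exists_mul_self_eq {R : Type*} [CommRing R] {I : Ideal R}
    [HenselianRing R I] (h2 : IsUnit (2 : R)) {x a : R} (hx : IsUnit x) (h : x * x - a ∈ I) :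
    ∃ y, y * y = a ∧ y - x ∈ I := by
  have hd : derivative (X ^ 2 - C a) = 2 * X := by
    rw [derivative_sub, derivative_X_pow, derivative_C, sub_zero]
    norm_num [C_ofNat]
  obtain ⟨y, hy, hyx⟩ := HenselianRing.is_henselian (X ^ 2 - C a)
    (monic_X_pow_sub_C a two_ne_zero) x (by simpa [pow_two] using h)
    (by simpa [hd] using (h2.mul hx).map (Ideal.Quotient.mk I))
  exact ⟨y, by simpa [pow_two, sub_eq_zero] using hy, hyx⟩

section LocalRing

variable {O : Type*} [CommRing O] [IsLocalRing O] {ι : Type*} [Fintype ι]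

noncomputable abbrev residueForm (b : ι → Oˣ) :
    QuadraticForm (ResidueField O) (ι → ResidueField O) :=
  diagQF (ResidueField O) fun i => residue O (b i : O)

theorem exists_unit_residue_eq {a : ResidueField O} (ha : a ≠ 0) :
    ∃ g : Oˣ, residue O g = a := by
  obtain ⟨g, rfl⟩ := residue_surjective a
  exact ⟨((residue_ne_zero_iff_isUnit g).mp ha).unit, rfl⟩

theorem residueForm_ne_zero {b : ι → Oˣ} (han : (residueForm b).Anisotropic) {x : ι → O}
    {i : ι} (hx : IsUnit (x i)) : residueForm b (fun i => residue O (x i)) ≠ 0 :=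
  fun h0 => (residue_ne_zero_iff_isUnit _).mpr hx (congrFun (han _ h0) i)

variable [HenselianRing O (maximalIdeal O)]

theorem exists_weightedSumSquares_eq_of_residue (h2 : IsUnit (2 : O)) (b : ι → Oˣ)
    {x₀ : ι → ResidueField O} (hx₀ : x₀ ≠ 0) {c : O} (h : residueForm b x₀ = residue O c) :
    ∃ y : ι → O, y ≠ 0 ∧ weightedSumSquares O (fun i => (b i : O)) y = c := by
  classical
  obtain ⟨i, hi⟩ := Function.ne_iff.mp hx₀
  obtain ⟨x, rfl⟩ : ∃ x : ι → O, (fun i => residue O (x i)) = x₀ :=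
    ⟨fun i => (residue_surjective (x₀ i)).choose,
      funext fun i => (residue_surjective (x₀ i)).choose_spec⟩
  have hxi : IsUnit (x i) := (residue_ne_zero_iff_isUnit _).mp hi
  set Q := weightedSumSquares O (fun i => (b i : O))
  have hQx : Q x - c ∈ maximalIdeal O := by
    rw [← residue_eq_zero_iff, map_sub, ← diagQF_map_apply, h, sub_self]
  -- Keep the other coordinates and solve `Q (update x i t) = c` for `t` by Hensel's lemma.
  obtain ⟨t, ht, htx⟩ := HenselianRing.exists_mul_self_eq h2 hxi
    (a := x i * x i - ↑(b i)⁻¹ * (Q x - c))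
    (by rw [sub_sub_cancel]; exact Ideal.mul_mem_left _ _ hQx)
  refine ⟨Function.update x i t, fun h0 => ?_, ?_⟩
  · have ht0 : t = 0 := by simpa using congrFun h0 i
    rw [ht0, zero_sub, neg_mem_iff, mem_maximalIdeal] at htx
    exact htx hxi
  · rw [weightedSumSquares_update, ht]
    linear_combination (c - Q x) * (b i).mul_inv

theorem exists_weightedSumSquares_eq_of_qfUniversal (h2 : IsUnit (2 : O)) {b : ι → Oˣ}
    (hu : QFUniversal (residueForm b)) (g : Oˣ) :
    ∃ x : ι → O, weightedSumSquares O (fun i => (b i : O)) x = g := by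
  have hg : residue O g ≠ 0 := (residue_ne_zero_iff_isUnit _).mpr g.isUnit
  obtain ⟨x₀, hx₀⟩ := hu _ hg
  obtain ⟨x, -, hx⟩ := exists_weightedSumSquares_eq_of_residue h2 b
    (by rintro rfl; exact hg (by simpa using hx₀.symm)) hx₀
  exact ⟨x, hx⟩

end LocalRing

section SplitForm

variable {O : Type*} [CommRing O] (K : Type*) [Field K] [Algebra O K]
  {ι₁ ι₂ : Type*} [Fintype ι₁] [Fintype ι₂]

noncomputable abbrev splitForm (π : O) (u : ι₁ → Oˣ) (w : ι₂ → Oˣ) :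
    QuadraticForm K (ι₁ ⊕ ι₂ → K) :=
  diagQF K (Sum.elim (fun i => algebraMap O K (u i : O))
    (fun j => algebraMap O K (π * (w j : O))))

variable {K}

theorem splitForm_zpow_mul (π : O) (u : ι₁ → Oˣ) (w : ι₂ → Oˣ) (k : ℤ) (y : ι₁ ⊕ ι₂ → O) :
    splitForm K π u w (fun s => algebraMap O K π ^ k * algebraMap O K (y s)) =
      algebraMap O K π ^ (2 * k) * algebraMap O K
        (weightedSumSquares O (fun i => (u i : O)) (fun i => y (Sum.inl i)) +
          π * weightedSumSquares O (fun j => (w j : O)) (fun j => y (Sum.inr j))) := by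
  have hcoeff : Sum.elim (fun i => algebraMap O K (u i : O))
      (fun j => algebraMap O K (π * w j)) =
      fun s => algebraMap O K (Sum.elim (fun i => (u i : O)) (fun j => π * w j) s) := by
    ext (i | j) <;> rfl
  have hv : (fun s => algebraMap O K π ^ k * algebraMap O K (y s)) =
      algebraMap O K π ^ k • fun s => algebraMap O K (y s) := rfl
  rw [splitForm, hcoeff, hv, QuadraticMap.map_smul, diagQF_map_apply,
    weightedSumSquares_sum_elim, smul_eq_mul, mul_comm 2 k, zpow_mul, zpow_two]
  congr 3
  simp [Finset.mul_sum, mul_assoc]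

end SplitForm

theorem Irreducible.algebraMap_ne_zero {O K : Type*} [CommRing O] [Field K] [Algebra O K]
    [IsFractionRing O K] {π : O} (hπ : Irreducible π) : algebraMap O K π ≠ 0 := by
  simpa using hπ.ne_zero

section DVR

variable {O : Type*} [CommRing O] [IsDomain O] [IsDiscreteValuationRing O] {π : O}
  {ι : Type*} [Fintype ι] {ι₁ ι₂ : Type*} [Fintype ι₁] [Fintype ι₂]

theorem exists_eq_pow_mul_of_ne_zero (hπ : Irreducible π) {a : ι → O} (ha : a ≠ 0) :
    ∃ (t : ℕ) (y : ι → O), (∃ i, IsUnit (y i)) ∧ ∀ i, a i = π ^ t * y i := by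
  obtain ⟨t, ht⟩ := IsDiscreteValuationRing.ideal_eq_span_pow_irreducible
    (s := Ideal.span (Set.range a)) (by simpa [Ideal.span_eq_bot, funext_iff] using ha) hπ
  have hdvd (i : ι) : π ^ t ∣ a i :=
    Ideal.mem_span_singleton.mp (ht ▸ Ideal.subset_span ⟨i, rfl⟩)
  choose y hy using hdvd
  refine ⟨t, y, ?_, hy⟩
  -- `π ^ t` is a combination of the `a i`, so `1` is the same combination of the `y i`.
  obtain ⟨c, hc⟩ :=
    Ideal.mem_span_range_iff_exists_fun.mp (ht ▸ Ideal.mem_span_singleton_self (π ^ t))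
  have h1 : ∑ i, c i * y i = 1 := by
    refine mul_left_cancel₀ (pow_ne_zero t hπ.ne_zero) ?_
    calc π ^ t * ∑ i, c i * y i = ∑ i, c i * a i := by
          simp only [Finset.mul_sum, hy, mul_left_comm]
      _ = π ^ t * 1 := by rw [hc, mul_one]
  by_contra! hy'
  have : ∑ i, c i * y i ∈ maximalIdeal O :=
    Ideal.sum_mem _ fun i _ => Ideal.mul_mem_left _ _ ((mem_maximalIdeal _).mpr (hy' i))
  rw [h1] at this
  exact (maximalIdeal.isMaximal O).ne_top ((Ideal.eq_top_iff_one _).mpr this)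

theorem exists_unit_of_primitive (hπ : Irreducible π) {u : ι₁ → Oˣ} {w : ι₂ → Oˣ}
    (han₁ : (residueForm u).Anisotropic) (han₂ : (residueForm w).Anisotropic)
    {y : ι₁ ⊕ ι₂ → O} (hy : ∃ s, IsUnit (y s)) :
    ∃ e : Oˣ,
      (weightedSumSquares O (fun i => (u i : O)) (fun i => y (Sum.inl i)) +
          π * weightedSumSquares O (fun j => (w j : O)) (fun j => y (Sum.inr j)) = e ∧
        residue O e = residueForm u fun i => residue O (y (Sum.inl i))) ∨
      (weightedSumSquares O (fun i => (u i : O)) (fun i => y (Sum.inl i)) +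
          π * weightedSumSquares O (fun j => (w j : O)) (fun j => y (Sum.inr j)) = π * e ∧
        residue O e = residueForm w fun j => residue O (y (Sum.inr j))) := by
  have hπ0 : residue O π = 0 :=
    (residue_eq_zero_iff _).mpr ((mem_maximalIdeal _).mpr hπ.not_isUnit)
  set T₁ := weightedSumSquares O (fun i => (u i : O)) (fun i => y (Sum.inl i))
  set T₂ := weightedSumSquares O (fun j => (w j : O)) (fun j => y (Sum.inr j))
  by_cases h₁ : ∃ i, IsUnit (y (Sum.inl i))
  · obtain ⟨i, hi⟩ := h₁
    have hres : residue O (T₁ + π * T₂) = residueForm u fun i => residue O (y (Sum.inl i)) := by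
      rw [map_add, map_mul, hπ0, zero_mul, add_zero, ← diagQF_map_apply]
    have hunit : IsUnit (T₁ + π * T₂) :=
      (residue_ne_zero_iff_isUnit _).mp (hres ▸ residueForm_ne_zero han₁ hi)
    exact ⟨hunit.unit, Or.inl ⟨rfl, hres⟩⟩
  · push Not at h₁
    obtain ⟨j, hj⟩ : ∃ j, IsUnit (y (Sum.inr j)) := by
      obtain ⟨s | j, hs⟩ := hy
      exacts [absurd hs (h₁ s), ⟨j, hs⟩]
    have hdvd (i : ι₁) : π ∣ y (Sum.inl i) := by
      rw [← Ideal.mem_span_singleton, ← hπ.maximalIdeal_eq, mem_maximalIdeal]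
      exact h₁ i
    choose z hz using hdvd
    have hT₁ : T₁ = π * (π * weightedSumSquares O (fun i => (u i : O)) z) := by
      simp only [T₁, weightedSumSquares_apply, hz, Finset.mul_sum, smul_eq_mul]
      exact Finset.sum_congr rfl fun i _ => by ring
    have hres : residue O (π * weightedSumSquares O (fun i => (u i : O)) z + T₂) =
        residueForm w fun j => residue O (y (Sum.inr j)) := by
      rw [map_add, map_mul, hπ0, zero_mul, zero_add, ← diagQF_map_apply]
    have hunit : IsUnit (π * weightedSumSquares O (fun i => (u i : O)) z + T₂) :=
      (residue_ne_zero_iff_isUnit _).mp (hres ▸ residueForm_ne_zero han₂ hj)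
    exact ⟨hunit.unit, Or.inr ⟨by rw [IsUnit.unit_spec, hT₁]; ring, hres⟩⟩

variable {K : Type*} [Field K] [Algebra O K] [IsFractionRing O K]

theorem exists_eq_zpow_mul_of_ne_zero (hπ : Irreducible π) {v : ι → K} (hv : v ≠ 0) :
    ∃ (k : ℤ) (y : ι → O), (∃ i, IsUnit (y i)) ∧
      v = fun i => algebraMap O K π ^ k * algebraMap O K (y i) := by
  obtain ⟨d, hd⟩ := IsLocalization.exist_integer_multiples_of_finite (nonZeroDivisors O) v
  choose a ha using hd
  have hd0 : algebraMap O K d ≠ 0 := IsFractionRing.to_map_ne_zero_of_mem_nonZeroDivisors d.2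
  have ha0 : a ≠ 0 := by
    obtain ⟨i, hi⟩ := Function.ne_iff.mp hv
    refine Function.ne_iff.mpr ⟨i, fun h => ?_⟩
    have := ha i
    rw [h, Pi.zero_apply, map_zero, Algebra.smul_def, eq_comm, mul_eq_zero] at this
    tauto
  obtain ⟨t, y, ⟨i, hi⟩, hy⟩ := exists_eq_pow_mul_of_ne_zero hπ ha0
  obtain ⟨s, h, hds⟩ :=
    IsDiscreteValuationRing.eq_unit_mul_pow_irreducible (nonZeroDivisors.ne_zero d.2) hπ
  have hπK : algebraMap O K π ≠ 0 := hπ.algebraMap_ne_zero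
  refine ⟨t - s, fun j => ↑h⁻¹ * y j, ⟨i, (h⁻¹).isUnit.mul hi⟩, funext fun j => ?_⟩
  have hj := ha j
  rw [hy j, Algebra.smul_def, hds] at hj
  rw [zpow_sub₀ hπK, zpow_natCast, zpow_natCast]
  simp only [map_mul, map_pow] at hj ⊢
  have hh : algebraMap O K ↑h⁻¹ * algebraMap O K h = 1 := by
    rw [← map_mul, Units.inv_mul, map_one]
  field_simp
  linear_combination (-algebraMap O K ↑h⁻¹) * hj - (v j * algebraMap O K π ^ s) * hh

theorem eq_of_unit_mul_zpow_eq (hπ : Irreducible π) {e g : Oˣ} {m n : ℤ}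
    (h : algebraMap O K e * algebraMap O K π ^ m = algebraMap O K g * algebraMap O K π ^ n) :
    m = n ∧ e = g := by
  wlog hmn : m ≤ n generalizing e g m n
  · obtain ⟨h₁, h₂⟩ := this h.symm (by omega)
    exact ⟨h₁.symm, h₂.symm⟩
  obtain ⟨N, rfl⟩ := Int.le.dest hmn
  have hO : (e : O) * π ^ 0 = g * π ^ N := by
    apply IsFractionRing.injective O K
    rw [zpow_add₀ hπ.algebraMap_ne_zero, zpow_natCast, ← mul_assoc, mul_right_comm] at h
    simpa using mul_right_cancel₀ (zpow_ne_zero m hπ.algebraMap_ne_zero) h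
  exact ⟨by simpa [eq_comm] using IsDiscreteValuationRing.unit_mul_pow_congr_pow hπ hπ _ _ _ _ hO,
    IsDiscreteValuationRing.unit_mul_pow_congr_unit hπ _ _ _ _ hO⟩

variable {u : ι₁ → Oˣ} {w : ι₂ → Oˣ}

theorem exists_splitForm_eq_unit_mul_zpow (hπ : Irreducible π)
    (han₁ : (residueForm u).Anisotropic) (han₂ : (residueForm w).Anisotropic)
    {v : ι₁ ⊕ ι₂ → K} (hv : v ≠ 0) :
    ∃ (k : ℤ) (e : Oˣ) (y : ι₁ ⊕ ι₂ → O),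
      (splitForm K π u w v = algebraMap O K e * algebraMap O K π ^ (2 * k) ∧
        residue O e = residueForm u fun i => residue O (y (Sum.inl i))) ∨
      (splitForm K π u w v = algebraMap O K e * algebraMap O K π ^ (2 * k + 1) ∧
        residue O e = residueForm w fun j => residue O (y (Sum.inr j))) := by
  obtain ⟨k, y, hy, rfl⟩ := exists_eq_zpow_mul_of_ne_zero hπ hv
  rw [splitForm_zpow_mul]
  obtain ⟨e, ⟨he, hres⟩ | ⟨he, hres⟩⟩ := exists_unit_of_primitive hπ han₁ han₂ hy
  · exact ⟨k, e, y, Or.inl ⟨by rw [he]; ring, hres⟩⟩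
  · exact ⟨k, e, y, Or.inr ⟨by rw [he, map_mul, zpow_add_one₀ hπ.algebraMap_ne_zero]; ring, hres⟩⟩

theorem anisotropic_splitForm (hπ : Irreducible π)
    (han₁ : (residueForm u).Anisotropic) (han₂ : (residueForm w).Anisotropic) :
    (splitForm K π u w).Anisotropic := by
  intro v hv
  by_contra hv0
  obtain ⟨k, e, -, ⟨he, -⟩ | ⟨he, -⟩⟩ := exists_splitForm_eq_unit_mul_zpow hπ han₁ han₂ hv0 <;>
    simp [hv, zpow_ne_zero _ (hπ.algebraMap_ne_zero (K := K))] at he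

theorem residue_eq_of_splitForm_eq (hπ : Irreducible π)
    (han₁ : (residueForm u).Anisotropic) (han₂ : (residueForm w).Anisotropic)
    {g : Oˣ} {m : ℤ} {v : ι₁ ⊕ ι₂ → K}
    (hv : splitForm K π u w v = algebraMap O K g * algebraMap O K π ^ m) :
    ∃ y : ι₁ ⊕ ι₂ → O,
      (Even m ∧ residue O g = residueForm u fun i => residue O (y (Sum.inl i))) ∨
      (Odd m ∧ residue O g = residueForm w fun j => residue O (y (Sum.inr j))) := by
  have hv0 : v ≠ 0 := by
    rintro rfl
    rw [QuadraticMap.map_zero, eq_comm] at hv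
    exact mul_ne_zero (by simp) (zpow_ne_zero m hπ.algebraMap_ne_zero) hv
  obtain ⟨k, e, y, ⟨he, hres⟩ | ⟨he, hres⟩⟩ := exists_splitForm_eq_unit_mul_zpow hπ han₁ han₂ hv0
  · obtain ⟨rfl, rfl⟩ := eq_of_unit_mul_zpow_eq hπ (he.symm.trans hv)
    exact ⟨y, Or.inl ⟨even_two_mul k, hres⟩⟩
  · obtain ⟨rfl, rfl⟩ := eq_of_unit_mul_zpow_eq hπ (he.symm.trans hv)
    exact ⟨y, Or.inr ⟨odd_two_mul_add_one k, hres⟩⟩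

theorem qfUniversal_residueForm_left (hπ : Irreducible π)
    (han₁ : (residueForm u).Anisotropic) (han₂ : (residueForm w).Anisotropic)
    (h : QFUniversal (splitForm K π u w)) : QFUniversal (residueForm u) := by
  intro a ha
  obtain ⟨g, rfl⟩ := exists_unit_residue_eq ha
  obtain ⟨v, hv⟩ := h (algebraMap O K g) (by simp)
  obtain ⟨y, ⟨-, hres⟩ | ⟨hodd, -⟩⟩ :=
    residue_eq_of_splitForm_eq (m := 0) hπ han₁ han₂ (by rw [hv, zpow_zero, mul_one])
  exacts [⟨_, hres.symm⟩, absurd hodd (by decide)]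

theorem qfUniversal_residueForm_right (hπ : Irreducible π)
    (han₁ : (residueForm u).Anisotropic) (han₂ : (residueForm w).Anisotropic)
    (h : QFUniversal (splitForm K π u w)) : QFUniversal (residueForm w) := by
  intro a ha
  obtain ⟨g, rfl⟩ := exists_unit_residue_eq ha
  obtain ⟨v, hv⟩ := h (algebraMap O K (π * g)) (by simp [hπ.ne_zero])
  obtain ⟨y, ⟨heven, -⟩ | ⟨-, hres⟩⟩ :=
    residue_eq_of_splitForm_eq (m := 1) hπ han₁ han₂ (by rw [hv, zpow_one, map_mul, mul_comm])
  exacts [absurd heven (by decide), ⟨_, hres.symm⟩]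

variable [HenselianRing O (maximalIdeal O)]

theorem anisotropic_residueForm (h2 : IsUnit (2 : O)) {b : ι → Oˣ}
    (h : (diagQF K fun i => algebraMap O K (b i : O)).Anisotropic) :
    (residueForm b).Anisotropic := by
  intro x₀ hx₀
  by_contra hne
  obtain ⟨y, hy0, hy⟩ := exists_weightedSumSquares_eq_of_residue h2 b hne (c := 0)
    (by rw [hx₀, map_zero])
  refine hy0 (funext fun i => IsFractionRing.injective O K ?_)
  have := h (fun i => algebraMap O K (y i)) (by rw [diagQF_map_apply, hy, map_zero])
  simpa using congrFun this i

theorem anisotropic_residueForm_of_splitForm (h2 : IsUnit (2 : O))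
    (h : (splitForm K π u w).Anisotropic) :
    (residueForm u).Anisotropic ∧ (residueForm w).Anisotropic := by
  refine ⟨anisotropic_residueForm h2 h.sum_elim_left, anisotropic_residueForm h2 (K := K) ?_⟩
  exact QuadraticMap.Anisotropic.of_mul_left (c := algebraMap O K π)
    (by simpa only [map_mul] using h.sum_elim_right)

theorem qfUniversal_splitForm (h2 : IsUnit (2 : O)) (hπ : Irreducible π)
    (hu₁ : QFUniversal (residueForm u)) (hu₂ : QFUniversal (residueForm w)) :
    QFUniversal (splitForm K π u w) := by
  intro α hα
  obtain ⟨m, g, rfl⟩ := IsDiscreteValuationRing.exists_units_eq_smul_zpow_of_irreducible hπ hα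
  rw [Units.smul_def, Algebra.smul_def]
  obtain ⟨k, rfl | rfl⟩ := Int.even_or_odd' m
  · obtain ⟨x, hx⟩ := exists_weightedSumSquares_eq_of_qfUniversal h2 hu₁ g
    refine ⟨fun s => algebraMap O K π ^ k * algebraMap O K (Sum.elim x 0 s), ?_⟩
    rw [splitForm_zpow_mul]
    simp [hx, mul_comm]
  · obtain ⟨x, hx⟩ := exists_weightedSumSquares_eq_of_qfUniversal h2 hu₂ g
    refine ⟨fun s => algebraMap O K π ^ k * algebraMap O K (Sum.elim 0 x s), ?_⟩
    rw [splitForm_zpow_mul, zpow_add_one₀ hπ.algebraMap_ne_zero]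
    simp [hx]
    ring

end DVR

/-- Over a complete discretely valued field `K` (the fraction field of a
complete discrete valuation ring `O` with residue field of characteristic `≠ 2`), a quadratic
form `q ≃ q₁ ⊥ π·q₂` (with unit entries) is anisotropic and universal over `K` iff both residue
forms have positive dimension and are anisotropic and universal over the residue field. -/
theorem stmt0 (O K : Type*) [CommRing O] [IsDomain O] [IsDiscreteValuationRing O]
    [IsAdicComplete (IsLocalRing.maximalIdeal O) O]
    [Field K] [Algebra O K] [IsFractionRing O K]
    (hchar : ringChar (IsLocalRing.ResidueField O) ≠ 2)
    (π : O) (hπ : Irreducible π)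
    (n₁ n₂ : ℕ) (u : Fin n₁ → Oˣ) (w : Fin n₂ → Oˣ) :
    ((diagQF K (Sum.elim (fun i => algebraMap O K (u i : O))
        (fun j => algebraMap O K (π * (w j : O))))).Anisotropic ∧
      QFUniversal (diagQF K (Sum.elim (fun i => algebraMap O K (u i : O))
        (fun j => algebraMap O K (π * (w j : O)))))) ↔
    (0 < n₁ ∧ 0 < n₂ ∧
      (diagQF (IsLocalRing.ResidueField O) fun i => IsLocalRing.residue O (u i : O)).Anisotropic ∧
      QFUniversal (diagQF (IsLocalRing.ResidueField O) fun i => IsLocalRing.residue O (u i : O)) ∧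
      (diagQF (IsLocalRing.ResidueField O) fun j => IsLocalRing.residue O (w j : O)).Anisotropic ∧
      QFUniversal (diagQF (IsLocalRing.ResidueField O) fun j => IsLocalRing.residue O (w j : O))) := by
  have h2 : IsUnit (2 : O) :=
    (residue_ne_zero_iff_isUnit _).mp (by rw [map_ofNat]; exact Ring.two_ne_zero hchar)
  change (splitForm K π u w).Anisotropic ∧ QFUniversal (splitForm K π u w) ↔
    0 < n₁ ∧ 0 < n₂ ∧ (residueForm u).Anisotropic ∧ QFUniversal (residueForm u) ∧
      (residueForm w).Anisotropic ∧ QFUniversal (residueForm w)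
  constructor
  · rintro ⟨han, hu⟩
    obtain ⟨han₁, han₂⟩ := anisotropic_residueForm_of_splitForm h2 han
    have hu₁ := qfUniversal_residueForm_left hπ han₁ han₂ hu
    have hu₂ := qfUniversal_residueForm_right hπ han₁ han₂ hu
    exact ⟨Fin.pos_iff_nonempty.mpr (nonempty_of_qfUniversal hu₁),
      Fin.pos_iff_nonempty.mpr (nonempty_of_qfUniversal hu₂), han₁, hu₁, han₂, hu₂⟩
  · rintro ⟨-, -, han₁, hu₁, han₂, hu₂⟩
    exact ⟨anisotropic_splitForm hπ han₁ han₂, qfUniversal_splitForm h2 hπ hu₁ hu₂⟩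
end

section
/- Let $k$ be a field of characteristic $\ne 2$. If $u_s(k) = 1$, then $m_s(k) = 1$. -/
/-!
A strong `u`-invariant `1` bounds `u(k)` by `1`, so the binary forms `⟨1, -b⟩` are isotropic
and every element of `k` is a square. Then `⟨1⟩` is anisotropic and universal, whence
`m_s(k) ≤ m(k) ≤ 1`. Conversely `m_s(k) ≥ 1` holds for every field: a universal form has positive
dimension, and over `k'(t)` no one-dimensional form `⟨a⟩` is universal, since representing `a t`
would make `t` a square, which fails by parity of degrees.
-/

open scoped Multiplicative ENNReal

universe u

section QuadraticForms

variable {K : Type*} [Field K]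

lemma diagQF_apply {ι : Type*} [Fintype ι] (a : ι → K) (x : ι → K) :
    diagQF K a x = ∑ i, a i * (x i * x i) := by
  simp [diagQF, QuadraticMap.weightedSumSquares_apply, smul_eq_mul]

lemma diagQF_fin_one_apply (a : Fin 1 → K) (x : Fin 1 → K) :
    diagQF K a x = a 0 * (x 0 * x 0) := by
  rw [diagQF_apply, Fin.sum_univ_one]

lemma anisotropic_diagQF_fin_one (a : Fin 1 → Kˣ) :
    (diagQF K fun i => (a i : K)).Anisotropic := by
  intro x hx
  rw [diagQF_fin_one_apply, mul_eq_zero, mul_self_eq_zero] at hx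
  ext i
  fin_cases i
  exact hx.resolve_left (a 0).ne_zero

lemma anisotropic_diagQF_one_neg {b : Kˣ} (hb : ¬IsSquare (b : K)) :
    (diagQF K fun i => ((![1, -b] : Fin 2 → Kˣ) i : K)).Anisotropic := by
  intro x hx
  rw [diagQF_apply, Fin.sum_univ_two] at hx
  have hx' : x 0 * x 0 = b * (x 1 * x 1) := by
    simp only [Matrix.cons_val_zero, Matrix.cons_val_one, Units.val_one, Units.val_neg] at hx
    linear_combination hx
  have h1 : x 1 = 0 := by
    by_contra h1
    exact hb ⟨x 0 / x 1, by field_simp; linear_combination -hx'⟩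
  have h0 : x 0 = 0 := by simpa [h1] using hx'
  ext i
  fin_cases i <;> simp [h0, h1]

lemma isSquare_of_one_mem_AUSet (h : 1 ∈ AUSet K) (b : K) : IsSquare b := by
  rcases eq_or_ne b 0 with rfl | hb
  · exact ⟨0, by simp⟩
  obtain ⟨a, -, huniv⟩ := h
  obtain ⟨x, hx⟩ := huniv _ (mul_ne_zero (a 0).ne_zero hb)
  rw [diagQF_fin_one_apply] at hx
  exact ⟨x 0, (mul_left_cancel₀ (a 0).ne_zero hx).symm⟩

lemma one_mem_AUSet_of_forall_isSquare (h : ∀ b : K, IsSquare b) : 1 ∈ AUSet K := by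
  refine ⟨fun _ => 1, anisotropic_diagQF_fin_one _, fun b _ => ?_⟩
  obtain ⟨c, hc⟩ := h b
  exact ⟨fun _ => c, by rw [diagQF_fin_one_apply, hc]; simp⟩

lemma zero_notMem_AUSet : 0 ∉ AUSet K := by
  rintro ⟨a, -, huniv⟩
  obtain ⟨x, hx⟩ := huniv 1 one_ne_zero
  simp [diagQF_apply] at hx

lemma RatFunc.not_isSquare_X : ¬IsSquare (RatFunc.X : RatFunc K) := by
  rintro ⟨c, hc⟩
  have hc0 : c ≠ 0 := by
    rintro rfl
    exact RatFunc.X_ne_zero (by simpa using hc)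
  have hdeg := RatFunc.intDegree_mul hc0 hc0
  rw [← hc, RatFunc.intDegree_X] at hdeg
  omega

lemma one_notMem_AUSet_ratFunc : 1 ∉ AUSet (RatFunc K) := fun h =>
  RatFunc.not_isSquare_X (isSquare_of_one_mem_AUSet h _)

end QuadraticForms

section Invariants

variable {K : Type*} [Field K]

lemma le_uInv {n : ℕ} (a : Fin n → Kˣ) (ha : (diagQF K fun i => (a i : K)).Anisotropic) :
    (n : ℕ∞) ≤ uInv K :=
  le_sSup ⟨n, ⟨a, ha⟩, rfl⟩

lemma isSquare_of_uInv_le_one (hu : uInv K ≤ 1) (b : K) : IsSquare b := by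
  rcases eq_or_ne b 0 with rfl | hb0
  · exact ⟨0, by simp⟩
  by_contra hb
  have h2 : ((2 : ℕ) : ℕ∞) ≤ 1 :=
    (le_uInv _ (anisotropic_diagQF_one_neg (b := Units.mk0 b hb0) hb)).trans hu
  exact absurd (ENat.natCast_le_natCast.mp h2) (by norm_num)

lemma mInv_le_one_of_forall_isSquare (h : ∀ b : K, IsSquare b) : mInv K ≤ 1 :=
  sInf_le ⟨1, one_mem_AUSet_of_forall_isSquare h, rfl⟩

lemma one_le_mInv : 1 ≤ mInv K := by
  refine le_sInf ?_
  rintro _ ⟨n, hn, rfl⟩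
  have : n ≠ 0 := by rintro rfl; exact zero_notMem_AUSet hn
  exact_mod_cast Nat.one_le_iff_ne_zero.mpr this

lemma two_le_mInv_ratFunc : 2 ≤ mInv (RatFunc K) := by
  refine le_sInf ?_
  rintro _ ⟨n, hn, rfl⟩
  have h0 : n ≠ 0 := by rintro rfl; exact zero_notMem_AUSet hn
  have h1 : n ≠ 1 := by rintro rfl; exact one_notMem_AUSet_ratFunc hn
  exact_mod_cast (by omega : 2 ≤ n)

end Invariants

section StrongInvariants

variable (k : Type u) [Field k]

lemma uInv_le_uS : (uInv k : ℝ≥0∞) ≤ uS k :=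
  le_sInf fun _ hn => hn.1 k inferInstance

lemma mS_le_mInv : mS k ≤ mInv k := by
  refine sSup_le ?_
  rintro _ ⟨n, hn, rfl⟩
  exact ENat.toENNReal_le.mpr (hn k inferInstance).1

lemma one_le_mS : 1 ≤ mS k :=
  le_sSup ⟨1, fun _ _ _ _ => ⟨one_le_mInv, two_le_mInv_ratFunc⟩, Nat.cast_one⟩

end StrongInvariants

theorem stmt8_general (k : Type u) [Field k]
    (h : uS k = 1) : mS k = 1 := by
  have hu : uInv k ≤ 1 := ENat.toENNReal_le.mp (by simpa [h] using uInv_le_uS k)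
  have hm : mInv k ≤ 1 := mInv_le_one_of_forall_isSquare (isSquare_of_uInv_le_one hu)
  exact le_antisymm ((mS_le_mInv k).trans (by exact_mod_cast hm)) (one_le_mS k)

/-- For a field `k` of characteristic `≠ 2`, if `u_s(k) = 1` then
`m_s(k) = 1`. -/
theorem stmt8 (k : Type u) [Field k] (hchar : ringChar k ≠ 2)
    (h : uS k = 1) : mS k = 1 :=
  stmt8_general k h
end

section
/- Let $k$ be a field of characteristic $\ne 2$ such that $m_s(k) = u_s(k) < \infty$. Then $m_s(k) = u_s(k) = 2^n$ for some integer $n \geq 0$, and for all finite field extensions $k'/k$: (a) $m(k') = u(k') = 2^n$, and (b) $m(k'(t)) = u(k'(t)) = 2^{n+1}$, where $k'(t)$ is the rational function field in one variable over $k'$. -/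
/-!
Pfister doubling: if `q` is anisotropic, its values are closed under multiplication and `τ ≠ 0`
is not a value of `q`, then `q ⊥ (-τ) q` is again anisotropic with multiplicatively closed values.
Doubling `⟨1⟩` for as long as the form is not universal produces anisotropic forms of dimension
`2 ^ i`, which are bounded by `u(k)`; so one of them is universal, and if `u(k) ≤ m(k)` then
`u(k) ≤ m(k) ≤ 2 ^ i ≤ u(k)`. When `m_s(k) = u_s(k)`, the definitions of the strong invariants
squeeze `m(k') ≤ u(k')` to `m_s(k)` and `m(k'(t)) ≤ u(k'(t))` to `2 m_s(k)`, as `k'(t)` is a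
function field in one variable over `k`.
-/

open scoped Multiplicative ENNReal

universe u

namespace QuadraticMap

variable {F V : Type*} [Field F] [AddCommGroup V] [Module F V]

def ValuesMulClosed (q : QuadraticForm F V) : Prop :=
  ∀ x y, ∃ z, q z = q x * q y

variable (q : QuadraticForm F V)

theorem exists_apply_eq_inv (x : V) : ∃ y, q y = (q x)⁻¹ := by
  refine ⟨(q x)⁻¹ • x, ?_⟩
  rw [QuadraticMap.map_smul, smul_eq_mul]
  rcases eq_or_ne (q x) 0 with h | h
  · simp [h]
  · field_simp

theorem ValuesMulClosed.exists_apply_eq_div {q : QuadraticForm F V} (hq : q.ValuesMulClosed)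
    (x y : V) : ∃ z, q z = q x / q y := by
  obtain ⟨y', hy'⟩ := q.exists_apply_eq_inv y
  rw [div_eq_mul_inv, ← hy']
  exact hq x y'

theorem apply_add_smul (s t : V) (e : F) :
    q (s + e • t) = q s + e ^ 2 * q t + e * polar q s t := by
  rw [QuadraticMap.map_add (⇑q), QuadraticMap.map_smul, polar_smul_right, smul_eq_mul,
    smul_eq_mul, pow_two]

theorem mul_apply_add_smul_add_mul_apply_sub_smul (a b : F) (s t : V) :
    a * q (s + b • t) + b * q (s - a • t) = (a + b) * (q s + a * b * q t) := by
  rw [sub_eq_add_neg, ← neg_smul, apply_add_smul, apply_add_smul]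
  ring

variable {q}

theorem Anisotropic.prod_smul (hq : q.Anisotropic) (hmul : q.ValuesMulClosed) {c : F}
    (hc : ∀ x, q x ≠ -c) : (q.prod (c • q)).Anisotropic := by
  rintro ⟨x, y⟩ hxy
  simp only [prod_apply, smul_apply, smul_eq_mul] at hxy
  by_cases hy : q y = 0
  · rw [hy, mul_zero, add_zero] at hxy
    rw [hq x hxy, hq y hy, Prod.mk_zero_zero]
  · obtain ⟨z, hz⟩ := hmul.exists_apply_eq_div x y
    refine absurd ?_ (hc z)
    rw [hz, div_eq_iff hy]
    linear_combination hxy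

theorem ValuesMulClosed.prod_smul (hmul : q.ValuesMulClosed) (c : F) :
    (q.prod (c • q)).ValuesMulClosed := by
  rintro ⟨x₁, y₁⟩ ⟨x₂, y₂⟩
  simp only [prod_apply, smul_apply, smul_eq_mul]
  by_cases hy₁ : q y₁ = 0
  · obtain ⟨z₁, hz₁⟩ := hmul x₁ x₂
    obtain ⟨z₂, hz₂⟩ := hmul x₁ y₂
    exact ⟨(z₁, z₂), by rw [hz₁, hz₂, hy₁]; ring⟩
  by_cases hx₁ : q x₁ = 0
  · obtain ⟨z₁, hz₁⟩ := hmul y₁ y₂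
    obtain ⟨z₂, hz₂⟩ := hmul y₁ x₂
    refine ⟨(c • z₁, z₂), ?_⟩
    rw [QuadraticMap.map_smul, smul_eq_mul, hz₁, hz₂, hx₁]
    ring
  -- the identity `mul_apply_add_smul_add_mul_apply_sub_smul` with `a = q x₁`, `b = c * q y₁`
  obtain ⟨t, ht⟩ : ∃ t, q t = q y₂ / (q x₁ * q y₁) := by
    obtain ⟨w, hw⟩ := hmul x₁ y₁
    rw [← hw]
    exact hmul.exists_apply_eq_div y₂ w
  obtain ⟨z₁, hz₁⟩ := hmul x₁ (x₂ + (c * q y₁) • t)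
  obtain ⟨z₂, hz₂⟩ := hmul y₁ (x₂ - q x₁ • t)
  refine ⟨(z₁, z₂), ?_⟩
  rw [hz₁, hz₂, ← mul_assoc c, mul_apply_add_smul_add_mul_apply_sub_smul, ht]
  field_simp

theorem Anisotropic.exists_ne_zero_apply_eq_neg {W : Type*} [AddCommGroup W] [Module F W]
    {r : QuadraticForm F W} (hq : q.Anisotropic) (h : ¬(q.prod r).Anisotropic) :
    ∃ x y, y ≠ 0 ∧ q x = -r y := by
  obtain ⟨⟨x, y⟩, hne, h0⟩ := (not_anisotropic_iff_exists _).mp h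
  rw [prod_apply] at h0
  refine ⟨x, y, fun hy => hne ?_, eq_neg_of_add_eq_zero_left h0⟩
  rw [hy, map_zero, add_zero] at h0
  rw [hq x h0, hy, Prod.mk_zero_zero]

end QuadraticMap

theorem Fin.exists_eq_append {α : Type*} {m n : ℕ} (z : Fin (m + n) → α) :
    ∃ x y, z = Fin.append x y :=
  ⟨_, _, Fin.append_castAdd_natAdd.symm⟩

theorem Fin.apply_append {α β : Type*} {m n : ℕ} (f : α → β) (x : Fin m → α) (y : Fin n → α) :
    (fun i => f (Fin.append x y i)) = Fin.append (fun i => f (x i)) (fun i => f (y i)) := by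
  funext i
  refine Fin.addCases (fun j => ?_) (fun j => ?_) i <;> simp

section Diagonal

variable {F : Type*} [Field F] {m n : ℕ}

theorem diagQF_append_apply (a : Fin m → F) (b : Fin n → F) (x : Fin m → F) (y : Fin n → F) :
    diagQF F (Fin.append a b) (Fin.append x y) = diagQF F a x + diagQF F b y := by
  simp [diagQF, QuadraticMap.weightedSumSquares_apply, Fin.sum_univ_add]

theorem diagQF_smul (c : F) (a : Fin n → F) : diagQF F (c • a) = c • diagQF F a := by
  ext x
  simp [diagQF, QuadraticMap.weightedSumSquares_apply, Finset.mul_sum, mul_assoc]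

theorem anisotropic_diagQF_append {a : Fin m → F} {b : Fin n → F}
    (h : ((diagQF F a).prod (diagQF F b)).Anisotropic) :
    (diagQF F (Fin.append a b)).Anisotropic := by
  intro z hz
  obtain ⟨x, y, rfl⟩ := Fin.exists_eq_append z
  rw [diagQF_append_apply] at hz
  obtain ⟨rfl, rfl⟩ := Prod.mk_eq_zero.mp (h (x, y) hz)
  exact Fin.append_castAdd_natAdd (f := 0)

theorem valuesMulClosed_diagQF_append {a : Fin m → F} {b : Fin n → F}
    (h : ((diagQF F a).prod (diagQF F b)).ValuesMulClosed) :
    (diagQF F (Fin.append a b)).ValuesMulClosed := by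
  intro z w
  obtain ⟨x, y, rfl⟩ := Fin.exists_eq_append z
  obtain ⟨x', y', rfl⟩ := Fin.exists_eq_append w
  obtain ⟨⟨x'', y''⟩, h''⟩ := h (x, y) (x', y')
  refine ⟨Fin.append x'' y'', ?_⟩
  simpa only [diagQF_append_apply, QuadraticMap.prod_apply] using h''

end Diagonal

def HasMulClosedAnisotropicDiag (F : Type*) [Field F] (n : ℕ) : Prop :=
  ∃ p : Fin n → Fˣ, (diagQF F fun i => (p i : F)).Anisotropic ∧
    (diagQF F fun i => (p i : F)).ValuesMulClosed

section Invariants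

variable {F : Type*} [Field F] {n : ℕ}

theorem hasMulClosedAnisotropicDiag_one : HasMulClosedAnisotropicDiag F 1 := by
  have hsq (x : Fin 1 → F) : diagQF F (fun _ => ((1 : Fˣ) : F)) x = x 0 * x 0 := by
    simp [diagQF, QuadraticMap.weightedSumSquares_apply]
  refine ⟨fun _ => 1, fun x hx => ?_, fun x y => ⟨fun _ => x 0 * y 0, ?_⟩⟩
  · rw [hsq, mul_self_eq_zero] at hx
    exact funext fun i => by rwa [Subsingleton.elim i 0]
  · simp only [hsq]
    ring

theorem hasMulClosedAnisotropicDiag_add_self_of_not_universal {p : Fin n → Fˣ}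
    (hani : (diagQF F fun i => (p i : F)).Anisotropic)
    (hmul : (diagQF F fun i => (p i : F)).ValuesMulClosed)
    (hnu : ¬QFUniversal (diagQF F fun i => (p i : F))) :
    HasMulClosedAnisotropicDiag F (n + n) := by
  obtain ⟨τ, hτ, hτq⟩ : ∃ τ : F, τ ≠ 0 ∧ ∀ x, diagQF F (fun i => (p i : F)) x ≠ τ := by
    simpa [QFUniversal] using hnu
  set c := Units.mk0 (-τ) (neg_ne_zero.mpr hτ)
  have hcoe : (fun i => ((Fin.append p (fun i => c * p i) i : Fˣ) : F)) =
      Fin.append (fun i => (p i : F)) ((c : F) • fun i => (p i : F)) := by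
    rw [Fin.apply_append]
    rfl
  refine ⟨Fin.append p (fun i => c * p i), ?_, ?_⟩ <;> rw [hcoe]
  · refine anisotropic_diagQF_append ?_
    rw [diagQF_smul]
    exact hani.prod_smul hmul (by simpa [c] using hτq)
  · refine valuesMulClosed_diagQF_append ?_
    rw [diagQF_smul]
    exact hmul.prod_smul _

theorem le_uInv_of_anisotropic {p : Fin n → Fˣ}
    (hp : (diagQF F fun i => (p i : F)).Anisotropic) : (n : ℕ∞) ≤ uInv F :=
  le_sSup ⟨n, ⟨p, hp⟩, rfl⟩

theorem mInv_le_of_mem_AUSet (hn : n ∈ AUSet F) : mInv F ≤ n :=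
  sInf_le ⟨n, hn, rfl⟩

theorem exists_anisotropic_eq_uInv (h : uInv F ≠ ⊤) :
    ∃ (n : ℕ) (p : Fin n → Fˣ), (diagQF F fun i => (p i : F)).Anisotropic ∧ uInv F = n := by
  have : Nonempty ((↑) '' {n : ℕ | ∃ p : Fin n → Fˣ,
      (diagQF F fun i => (p i : F)).Anisotropic} : Set ℕ∞) :=
    ⟨0, 0, ⟨Fin.elim0, fun x _ => Subsingleton.elim x 0⟩, rfl⟩
  obtain ⟨n, ⟨p, hp⟩, hn⟩ := ENat.sSup_mem_of_nonempty_of_lt_top h.lt_top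
  exact ⟨n, p, hp, hn.symm⟩

theorem qfUniversal_of_anisotropic_of_uInv_le {p : Fin n → Fˣ}
    (hp : (diagQF F fun i => (p i : F)).Anisotropic) (hu : uInv F ≤ n) :
    QFUniversal (diagQF F fun i => (p i : F)) := by
  intro a ha
  set r := diagQF F fun _ : Fin 1 => -a
  have hr (y : Fin 1 → F) : r y = -a * (y 0 * y 0) := by
    simp [r, diagQF, QuadraticMap.weightedSumSquares_apply]
  have hiso : ¬((diagQF F fun i => (p i : F)).prod r).Anisotropic := by
    intro hani
    have := le_uInv_of_anisotropic
      (p := Fin.append p fun _ => Units.mk0 (-a) (neg_ne_zero.mpr ha))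
      (by rw [Fin.apply_append]; exact anisotropic_diagQF_append hani)
    have := this.trans hu
    norm_cast at this
    omega
  obtain ⟨x, y, hy, hxy⟩ := hp.exists_ne_zero_apply_eq_neg hiso
  have hy0 : y 0 ≠ 0 := fun h => hy (funext fun i => by rwa [Subsingleton.elim i 0])
  refine ⟨(y 0)⁻¹ • x, ?_⟩
  rw [QuadraticMap.map_smul, smul_eq_mul, hxy, hr]
  field_simp

theorem mInv_le_uInv (h : uInv F ≠ ⊤) : mInv F ≤ uInv F := by
  obtain ⟨n, p, hp, hn⟩ := exists_anisotropic_eq_uInv h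
  rw [hn]
  exact mInv_le_of_mem_AUSet ⟨p, hp, qfUniversal_of_anisotropic_of_uInv_le hp hn.le⟩

theorem mInv_eq_and_uInv_eq_of_le {a : ℝ≥0∞} (ha : a ≠ ⊤)
    (hm : a ≤ mInv F) (hu : (uInv F : ℝ≥0∞) ≤ a) :
    (mInv F : ℝ≥0∞) = a ∧ (uInv F : ℝ≥0∞) = a := by
  have hmu : (mInv F : ℝ≥0∞) ≤ uInv F :=
    ENat.toENNReal_le.mpr (mInv_le_uInv (by simpa using (hu.trans_lt ha.lt_top).ne))
  exact ⟨le_antisymm (hmu.trans hu) hm, le_antisymm hu (hm.trans hmu)⟩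

theorem exists_eq_two_pow_of_uInv_eq_of_le_mInv {d : ℕ} (hu : uInv F = d)
    (hm : (d : ℕ∞) ≤ mInv F) : ∃ i, d = 2 ^ i := by
  by_contra! hd
  have hgood (i : ℕ) : HasMulClosedAnisotropicDiag F (2 ^ i) := by
    induction i with
    | zero => exact hasMulClosedAnisotropicDiag_one
    | succ i ih =>
      obtain ⟨p, hani, hmul⟩ := ih
      rw [pow_succ, mul_two]
      refine hasMulClosedAnisotropicDiag_add_self_of_not_universal hani hmul fun huniv => hd i ?_
      have hle : ((2 ^ i : ℕ) : ℕ∞) ≤ d := hu ▸ le_uInv_of_anisotropic hani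
      have hge : (d : ℕ∞) ≤ (2 ^ i : ℕ) := hm.trans (mInv_le_of_mem_AUSet ⟨p, hani, huniv⟩)
      exact_mod_cast le_antisymm hge hle
  obtain ⟨p, hani, -⟩ := hgood d
  have : ((2 ^ d : ℕ) : ℕ∞) ≤ d := hu ▸ le_uInv_of_anisotropic hani
  exact (Nat.lt_two_pow_self).not_ge (by exact_mod_cast this)

end Invariants

theorem isOneVarFunctionField_ratFunc (k k' : Type*) [Field k] [Field k'] [Algebra k k']
    [FiniteDimensional k k'] : IsOneVarFunctionField k (RatFunc k') := by
  refine ⟨RatFunc.X, (RatFunc.transcendental_X).restrictScalars (algebraMap k k').injective, ?_⟩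
  set E := IntermediateField.adjoin k {(RatFunc.X : RatFunc k')}
  set K₁ := (IsScalarTower.toAlgHom k k' (RatFunc k')).fieldRange
  have : FiniteDimensional k K₁ :=
    (AlgHom.equivFieldRange _).toLinearEquiv.finiteDimensional
  have htop : IntermediateField.adjoin E (K₁ : Set (RatFunc k')) = ⊤ := by
    rw [← IntermediateField.toSubfield_inj, IntermediateField.top_toSubfield, eq_top_iff,
      ← IntermediateField.top_toSubfield (F := k'), ← RatFunc.adjoin_X,
      IntermediateField.adjoin_toSubfield, IntermediateField.adjoin_toSubfield]
    refine Subfield.closure_mono (Set.union_subset ?_ ?_)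
    · exact fun _ hx => Or.inr (by simpa [K₁] using hx)
    · rintro _ rfl
      exact Or.inl ⟨⟨_, IntermediateField.mem_adjoin_simple_self k _⟩, rfl⟩
  have hrank := IntermediateField.adjoin_rank_le_of_isAlgebraic_right E K₁
  rw [htop] at hrank
  have : FiniteDimensional E (⊤ : IntermediateField E (RatFunc k')) :=
    Module.rank_lt_aleph0_iff.mp (hrank.trans_lt (Module.rank_lt_aleph0 k K₁))
  exact IntermediateField.topEquiv.toLinearEquiv.finiteDimensional

section StrongInvariants

variable (k : Type u) [Field k]

theorem uInv_le_uS_s10 (k' : Type u) [Field k'] [Algebra k k'] [FiniteDimensional k k'] :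
    (uInv k' : ℝ≥0∞) ≤ uS k :=
  le_sInf fun _ hn => hn.1 k' inferInstance

theorem uInv_le_two_mul_uS (K' : Type u) [Field K'] [Algebra k K']
    (hK : IsOneVarFunctionField k K') : (uInv K' : ℝ≥0∞) ≤ 2 * uS k := by
  rw [mul_comm, ← ENNReal.div_le_iff_le_mul (.inl two_ne_zero) (.inl ENNReal.ofNat_ne_top)]
  refine le_sInf fun _ hn => ?_
  rw [ENNReal.div_le_iff_le_mul (.inl two_ne_zero) (.inl ENNReal.ofNat_ne_top), mul_comm]
  exact hn.2 K' hK

theorem mS_le_mInv_s10 (k' : Type u) [Field k'] [Algebra k k'] [FiniteDimensional k k'] :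
    mS k ≤ mInv k' := by
  refine sSup_le ?_
  rintro _ ⟨n, hn, rfl⟩
  dsimp only
  exact_mod_cast (hn k' inferInstance).1

theorem two_mul_mS_le_mInv_ratFunc (k' : Type u) [Field k'] [Algebra k k']
    [FiniteDimensional k k'] : 2 * mS k ≤ mInv (RatFunc k') := by
  rw [mS, ENNReal.mul_sSup]
  refine iSup₂_le ?_
  rintro _ ⟨n, hn, rfl⟩
  dsimp only
  exact_mod_cast (hn k' inferInstance).2

end StrongInvariants

theorem stmt10_general (k : Type u) [Field k]
    (h : mS k = uS k) (hfin : uS k ≠ ⊤) :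
    ∃ n : ℕ, mS k = 2 ^ n ∧ uS k = 2 ^ n ∧
      ∀ (k' : Type u) [Field k'] [Algebra k k'], FiniteDimensional k k' →
        (mInv k' = 2 ^ n ∧ uInv k' = 2 ^ n) ∧
        (mInv (RatFunc k') = 2 ^ (n + 1) ∧ uInv (RatFunc k') = 2 ^ (n + 1)) := by
  have hm : mS k ≠ ⊤ := h ▸ hfin
  have hbase (k' : Type u) [Field k'] [Algebra k k'] [FiniteDimensional k k'] :
      (mInv k' : ℝ≥0∞) = mS k ∧ (uInv k' : ℝ≥0∞) = mS k :=
    mInv_eq_and_uInv_eq_of_le hm (mS_le_mInv_s10 k k') (h ▸ uInv_le_uS_s10 k k')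
  have hrat (k' : Type u) [Field k'] [Algebra k k'] [FiniteDimensional k k'] :
      (mInv (RatFunc k') : ℝ≥0∞) = 2 * mS k ∧ (uInv (RatFunc k') : ℝ≥0∞) = 2 * mS k :=
    mInv_eq_and_uInv_eq_of_le (ENNReal.mul_ne_top ENNReal.ofNat_ne_top hm)
      (two_mul_mS_le_mInv_ratFunc k k')
      (h ▸ uInv_le_two_mul_uS k _ (isOneVarFunctionField_ratFunc k k'))
  obtain ⟨hmk, huk⟩ := hbase k
  obtain ⟨d, hd⟩ : ∃ d : ℕ, uInv k = d :=
    (ENat.ne_top_iff_exists.mp (ENat.toENNReal_ne_top.mp (huk ▸ hm))).imp fun _ => Eq.symm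
  have hmu : mInv k = uInv k := ENat.toENNReal_inj.mp (hmk.trans huk.symm)
  obtain ⟨n, rfl⟩ := exists_eq_two_pow_of_uInv_eq_of_le_mInv hd (hmu.trans hd).ge
  have hmS : mS k = 2 ^ n := by rw [← huk, hd]; simp
  refine ⟨n, hmS, h ▸ hmS, fun k' _ _ _ => ?_⟩
  obtain ⟨hm₁, hu₁⟩ := hbase k'
  obtain ⟨hm₂, hu₂⟩ := hrat k'
  rw [hmS] at hm₁ hu₁ hm₂ hu₂
  rw [← pow_succ'] at hm₂ hu₂
  exact ⟨⟨by exact_mod_cast hm₁, by exact_mod_cast hu₁⟩,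
    by exact_mod_cast hm₂, by exact_mod_cast hu₂⟩

/-- If `k` has characteristic `≠ 2` and `m_s(k) = u_s(k) < ∞`, then
`m_s(k) = u_s(k) = 2 ^ n` for some `n ≥ 0`, and for every finite field extension `k'/k`:
(a) `m(k') = u(k') = 2 ^ n`, and (b) `m(k'(t)) = u(k'(t)) = 2 ^ (n + 1)`. -/
theorem stmt10 (k : Type u) [Field k] (hchar : ringChar k ≠ 2)
    (h : mS k = uS k) (hfin : uS k ≠ ⊤) :
    ∃ n : ℕ, mS k = 2 ^ n ∧ uS k = 2 ^ n ∧
      ∀ (k' : Type u) [Field k'] [Algebra k k'], FiniteDimensional k k' →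
        (mInv k' = 2 ^ n ∧ uInv k' = 2 ^ n) ∧
        (mInv (RatFunc k') = 2 ^ (n + 1) ∧ uInv (RatFunc k') = 2 ^ (n + 1)) :=
  stmt10_general k h hfin
end
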